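/- arXiv:1303.6186 — 4 statements merged into one kernel-verified Lean document; each statement's English description precedes it below -/
import Mathlib

section
/- Let n ≥ 2 and let (M,*) be a magma. Every f : Boolⁿ → M satisfies A(i)∘A(j)(f) = A(j)∘A(i)(f) for all indices i ≠ j if and only if (a*b)*(c*d) = (a*c)*(b*d) holds for all a,b,c,d ∈ M. -/
/-- Abstraction with respect to `op` over the `i`-th Boolean variable. -/
def abstr {M : Type*} {n : ℕ} (op : M → M → M) (i : Fin n)
    (f : (Fin n → Bool) → M) : (Fin n → Bool) → M :=
  fun b => op (f (Function.update b i false)) (f (Function.update b i true))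

theorem stmt_1 {M : Type*} (op : M → M → M) (n : ℕ) (hn : 2 ≤ n) :
    (∀ f : (Fin n → Bool) → M, ∀ i j : Fin n, i ≠ j →
        abstr op i (abstr op j f) = abstr op j (abstr op i f)) ↔
    (∀ a b c d : M, op (op a b) (op c d) = op (op a c) (op b d)) := by
  constructor
  · intro h a b c d
    have i : Fin n := ⟨0, by omega⟩
    have j : Fin n := ⟨1, by omega⟩
    set i : Fin n := ⟨0, by omega⟩ with hi
    set j : Fin n := ⟨1, by omega⟩ with hj
    have hij : i ≠ j := by simp [hi, hj, Fin.ext_iff]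
    set f : (Fin n → Bool) → M :=
      fun v => if v i then (if v j then d else c) else (if v j then b else a) with hf
    have := congrFun (h f i j hij) (fun _ => false)
    simpa [abstr, hf, Function.update_self, Function.update_of_ne hij,
      Function.update_of_ne hij.symm] using this
  · intro h f i j hij
    funext b
    simp only [abstr]
    rw [h]
    simp [Function.update_comm hij]
end

section
/- Suppose t : ℝ × ℝ → ℝ is affine, t(x,y) = a·x + b·y + c, is associative (t(x,t(y,z)) = t(t(x,y),z) for all x,y,z) and not commutative (there exist x,y with t(x,y) ≠ t(y,x)). Then t is a projection: either t(x,y) = x for all x,y, or t(x,y) = y for all x,y. -/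
theorem stmt_15 (a b c : ℝ) (t : ℝ → ℝ → ℝ)
    (ht : ∀ x y : ℝ, t x y = a * x + b * y + c)
    (hassoc : ∀ x y z : ℝ, t x (t y z) = t (t x y) z)
    (hnc : ∃ x y : ℝ, t x y ≠ t y x) :
    (∀ x y : ℝ, t x y = x) ∨ (∀ x y : ℝ, t x y = y) := by
  have key : ∀ x y z : ℝ, a*x + b*(a*y+b*z+c)+c = a*(a*x+b*y+c)+b*z+c := by
    intro x y z
    have := hassoc x y z
    simpa [ht] using this
  have h1 := key 1 0 0
  have h2 := key 0 0 1
  have h3 := key 0 0 0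
  obtain ⟨x, y, hxy⟩ := hnc
  have hab : a ≠ b := by
    intro h
    apply hxy
    rw [ht, ht, h]; ring
  have hc : c = 0 := by
    have hz : c * (b - a) = 0 := by nlinarith
    rcases mul_eq_zero.mp hz with h | h
    · exact h
    · exact absurd (by linarith : a = b) hab
  have ha : a = 0 ∨ a = 1 := by
    have : a * (a - 1) = 0 := by nlinarith
    rcases mul_eq_zero.mp this with h | h
    · exact Or.inl h
    · exact Or.inr (by linarith)
  have hb : b = 0 ∨ b = 1 := by
    have : b * (b - 1) = 0 := by nlinarith
    rcases mul_eq_zero.mp this with h | h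
    · exact Or.inl h
    · exact Or.inr (by linarith)
  rcases ha with ha | ha <;> rcases hb with hb | hb
  · exact absurd (ha.trans hb.symm) hab
  · right; intro u v; rw [ht, ha, hb, hc]; ring
  · left; intro u v; rw [ht, ha, hb, hc]; ring
  · exact absurd (ha.trans hb.symm) hab
end

section
/- Define h on M = (4,∞) ⊂ ℝ by h(x,y) = min(min(x+1,16)·y, 64). Then h maps M × M into M (indeed h(x,y) > 20 for all x,y ∈ M), h is associative with h(h(x,y),z) = h(x,h(y,z)) = 64 for all x,y,z ∈ M, and h is not commutative (h(5,4.5) ≠ h(4.5,5)). -/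
/-- The operation `h(x,y) = min(min(x+1,16)·y, 64)` on `(4,∞)`. -/
noncomputable def h16 : ℝ → ℝ → ℝ := fun x y => min (min (x + 1) 16 * y) 64

lemma h16_gt20 {x y : ℝ} (hx : 4 < x) (hy : 4 < y) : 20 < h16 x y := by
  have h5 : (5 : ℝ) ≤ min (x + 1) 16 := le_min (by linarith) (by norm_num)
  have : (20 : ℝ) < min (x + 1) 16 * y := by nlinarith
  exact lt_min this (by norm_num)

lemma h16_le64 (x y : ℝ) : h16 x y ≤ 64 := min_le_right _ _

theorem stmt_16 :
    (∀ x ∈ Set.Ioi (4 : ℝ), ∀ y ∈ Set.Ioi (4 : ℝ),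
      h16 x y ∈ Set.Ioi (4 : ℝ) ∧ 20 < h16 x y) ∧
    (∀ x ∈ Set.Ioi (4 : ℝ), ∀ y ∈ Set.Ioi (4 : ℝ), ∀ z ∈ Set.Ioi (4 : ℝ),
      h16 (h16 x y) z = 64 ∧ h16 x (h16 y z) = 64) ∧
    h16 5 4.5 ≠ h16 4.5 5 := by
  refine ⟨fun x hx y hy => ?_, fun x hx y hy z hz => ?_, ?_⟩
  · have := h16_gt20 (Set.mem_Ioi.mp hx) (Set.mem_Ioi.mp hy)
    exact ⟨Set.mem_Ioi.mpr (by linarith), this⟩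
  · simp only [Set.mem_Ioi] at hx hy hz
    constructor
    · have h1 := h16_gt20 hx hy
      have hmin : min (h16 x y + 1) 16 = 16 := min_eq_right (by linarith)
      show min (min (h16 x y + 1) 16 * z) 64 = 64
      rw [hmin]
      exact min_eq_right (by linarith)
    · have h1 := h16_gt20 hy hz
      have h5 : (5 : ℝ) ≤ min (x + 1) 16 := le_min (by linarith) (by norm_num)
      show min (min (x + 1) 16 * h16 y z) 64 = 64
      refine min_eq_right ?_
      nlinarith
  · show min (min ((5:ℝ) + 1) 16 * 4.5) 64 ≠ min (min ((4.5:ℝ) + 1) 16 * 5) 64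
    norm_num
end

section
/- Let (M,*) be a magma. If there exists some n ≥ 2 such that every f : Boolⁿ → M satisfies A(i)∘A(j)(f) = A(j)∘A(i)(f) for all i ≠ j, then for every m ≥ 2 the same holds for all f : Bool^m → M. -/
/-- Abstraction with respect to `op` over the `i`-th Boolean variable. -/
def abstr18 {M : Type*} {n : ℕ} (op : M → M → M) (i : Fin n)
    (f : (Fin n → Bool) → M) : (Fin n → Bool) → M :=
  fun b => op (f (Function.update b i false)) (f (Function.update b i true))

lemma medial18 {M : Type*} (op : M → M → M)
    (h : ∃ n : ℕ, 2 ≤ n ∧ ∀ f : (Fin n → Bool) → M, ∀ i j : Fin n, i ≠ j →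
        abstr18 op i (abstr18 op j f) = abstr18 op j (abstr18 op i f)) :
    ∀ a b c d : M, op (op a b) (op c d) = op (op a c) (op b d) := by
  obtain ⟨n, hn, H⟩ := h
  intro a b c d
  set i : Fin n := ⟨0, by omega⟩
  set j : Fin n := ⟨1, by omega⟩
  have hij : i ≠ j := by simp [i, j, Fin.ext_iff]
  set g : Bool → Bool → M := fun x y =>
    if x then (if y then d else c) else (if y then b else a) with hg
  set f : (Fin n → Bool) → M := fun v => g (v i) (v j) with hf
  have := congrFun (H f i j hij) (fun _ => false)
  simp only [abstr18, hf, Function.update_self,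
    Function.update_of_ne hij, Function.update_of_ne hij.symm] at this
  simpa [hg] using this

theorem stmt_18 {M : Type*} (op : M → M → M)
    (h : ∃ n : ℕ, 2 ≤ n ∧ ∀ f : (Fin n → Bool) → M, ∀ i j : Fin n, i ≠ j →
        abstr18 op i (abstr18 op j f) = abstr18 op j (abstr18 op i f)) :
    ∀ m : ℕ, 2 ≤ m → ∀ f : (Fin m → Bool) → M, ∀ i j : Fin m, i ≠ j →
        abstr18 op i (abstr18 op j f) = abstr18 op j (abstr18 op i f) := by
  have med := medial18 op h
  intro m _ f i j hij
  funext b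
  show op (op (f (Function.update (Function.update b i false) j false))
           (f (Function.update (Function.update b i false) j true)))
       (op (f (Function.update (Function.update b i true) j false))
           (f (Function.update (Function.update b i true) j true)))
     = op (op (f (Function.update (Function.update b j false) i false))
           (f (Function.update (Function.update b j false) i true)))
       (op (f (Function.update (Function.update b j true) i false))
           (f (Function.update (Function.update b j true) i true)))
  simp only [Function.update_comm hij.symm]
  exact med _ _ _ _
end
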